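/- arXiv:2602.16910 — 2 statements merged into one kernel-verified Lean document; each statement's English description precedes it below -/
import Mathlib

section
/- For any k ≥ 2, the number of triples of 'break positions' on a cycle of length 2k such that all three pairwise circular distances between consecutive breaks (going around the cycle) are at most k-1 equals 2·C(k,3). -/
/-!
List a valid break set increasingly as `a < b < c`; it is determined by the wrap-around gap
`z = 2k - c + a`, the first break `a < z` and the first gap `x = b - a`. The three gap bounds
become `z ≤ k - 1` and `k + 1 - z ≤ x ≤ k - 1`, so each `z < k` contributes `z (z - 1) = 2 C(z, 2)`
break sets, and the hockey-stick identity sums these to `2 C(k, 3)`.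
-/

/-- Three-element break sets on the cycle `Z/2k` all of whose three circular intervals
(between consecutive breaks, going around the cycle) have length at most `k - 1`. -/
def threeClawBreaks (k : ℕ) : Finset (Finset (Fin (2 * k))) :=
  Finset.univ.filter fun s =>
    ∃ a b c : Fin (2 * k), a.1 < b.1 ∧ b.1 < c.1 ∧ s = {a, b, c} ∧
      b.1 - a.1 ≤ k - 1 ∧ c.1 - b.1 ≤ k - 1 ∧ 2 * k - c.1 + a.1 ≤ k - 1

open Finset

theorem Nat.sum_range_choose_eq_choose_succ (n m : ℕ) :
    ∑ i ∈ range n, i.choose m = n.choose (m + 1) := by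
  induction n with
  | zero => simp
  | succ n ih => rw [sum_range_succ, ih, Nat.choose_succ_succ', add_comm]

theorem Nat.mul_pred_eq_two_mul_choose_two (n : ℕ) : n * (n - 1) = 2 * n.choose 2 := by
  rw [Nat.choose_two_right, Nat.mul_div_cancel' (Nat.even_mul_pred_self n).two_dvd]

theorem injOn_insert_insert_singleton {α : Type*} [LinearOrder α] :
    Set.InjOn (fun t : α × α × α => ({t.1, t.2.1, t.2.2} : Finset α))
      {t | t.1 < t.2.1 ∧ t.2.1 < t.2.2} := by
  rintro ⟨a, b, c⟩ ⟨hab, hbc⟩ ⟨a', b', c'⟩ ⟨hab', hbc'⟩ hset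
  have mem {x : α} (hx : x ∈ ({a, b, c} : Finset α)) : x = a' ∨ x = b' ∨ x = c' := by
    simpa [hset] using hx
  have mem' {x : α} (hx : x ∈ ({a', b', c'} : Finset α)) : x = a ∨ x = b ∨ x = c := by
    simpa [← hset] using hx
  have ha : a = a' := by
    rcases mem (x := a) (by simp) with h | h | h <;>
      rcases mem' (x := a') (by simp) with h' | h' | h' <;> order
  have hc : c = c' := by
    rcases mem (x := c) (by simp) with h | h | h <;>
      rcases mem' (x := c') (by simp) with h' | h' | h' <;> order
  refine Prod.ext ha (Prod.ext ?_ hc)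
  rcases mem (x := b) (by simp) with h | h | h <;> order

def breakTriples (k : ℕ) : Finset (Fin (2 * k) × Fin (2 * k) × Fin (2 * k)) :=
  univ.filter fun t => t.1.1 < t.2.1.1 ∧ t.2.1.1 < t.2.2.1 ∧
    t.2.1.1 - t.1.1 ≤ k - 1 ∧ t.2.2.1 - t.2.1.1 ≤ k - 1 ∧ 2 * k - t.2.2.1 + t.1.1 ≤ k - 1

@[simp]
theorem mem_breakTriples {k : ℕ} {a b c : Fin (2 * k)} :
    (a, b, c) ∈ breakTriples k ↔ a.1 < b.1 ∧ b.1 < c.1 ∧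
      b.1 - a.1 ≤ k - 1 ∧ c.1 - b.1 ≤ k - 1 ∧ 2 * k - c.1 + a.1 ≤ k - 1 := by
  simp [breakTriples]

theorem threeClawBreaks_eq_image (k : ℕ) :
    threeClawBreaks k = (breakTriples k).image fun t => {t.1, t.2.1, t.2.2} := by
  ext s
  simp only [threeClawBreaks, mem_filter, mem_univ, true_and, mem_image, Prod.exists,
    mem_breakTriples]
  constructor
  · rintro ⟨a, b, c, hab, hbc, rfl, h⟩
    exact ⟨a, b, c, ⟨hab, hbc, h⟩, rfl⟩
  · rintro ⟨a, b, c, ⟨hab, hbc, h⟩, rfl⟩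
    exact ⟨a, b, c, hab, hbc, rfl, h⟩

/-- `⟨z, (a, x)⟩` encodes the break set `{a, a + x, a + 2k - z}`. -/
def gapParams (k : ℕ) : Finset (Σ _ : ℕ, ℕ × ℕ) :=
  (range k).sigma fun z => range z ×ˢ Icc (k + 1 - z) (k - 1)

@[simp]
theorem mem_gapParams {k z a x : ℕ} :
    ⟨z, (a, x)⟩ ∈ gapParams k ↔ z < k ∧ a < z ∧ k + 1 - z ≤ x ∧ x ≤ k - 1 := by
  simp [gapParams]

theorem card_breakTriples (k : ℕ) : #(breakTriples k) = #(gapParams k) := by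
  apply card_nbij fun t => ⟨2 * k - t.2.2 + t.1, (t.1, t.2.1 - t.1)⟩
  · rintro ⟨a, b, c⟩ h
    simp only [mem_coe, mem_breakTriples, mem_gapParams] at h ⊢
    omega
  · rintro ⟨a, b, c⟩ h ⟨a', b', c'⟩ h' heq
    simp only [mem_coe, mem_breakTriples] at h h'
    simp only [Sigma.mk.injEq, heq_eq_eq, Prod.mk.injEq] at heq
    simp only [Prod.mk.injEq, Fin.ext_iff]
    omega
  · rintro ⟨z, a, x⟩ h
    simp only [mem_coe, mem_gapParams] at h
    refine ⟨(⟨a, by omega⟩, ⟨a + x, by omega⟩, ⟨a + 2 * k - z, by omega⟩), ?_, ?_⟩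
    · simp only [mem_coe, mem_breakTriples]
      omega
    · simp only [Sigma.mk.injEq, heq_eq_eq, Prod.mk.injEq, true_and]
      omega

theorem card_gapParams (k : ℕ) : #(gapParams k) = 2 * k.choose 3 := by
  have card_fiber (z : ℕ) (hz : z ∈ range k) :
      #(range z ×ˢ Icc (k + 1 - z) (k - 1)) = 2 * z.choose 2 := by
    rw [card_product, card_range, Nat.card_Icc, ← Nat.mul_pred_eq_two_mul_choose_two]
    have := mem_range.mp hz
    congr 1
    omega
  rw [gapParams, card_sigma, sum_congr rfl card_fiber, ← mul_sum,
    Nat.sum_range_choose_eq_choose_succ]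

theorem threeClawBreaks_card_general (k : ℕ) :
    (threeClawBreaks k).card = 2 * Nat.choose k 3 := by
  rw [threeClawBreaks_eq_image, card_image_of_injOn, card_breakTriples, card_gapParams]
  refine injOn_insert_insert_singleton.mono fun t ht => ?_
  obtain ⟨a, b, c⟩ := t
  rw [mem_coe, mem_breakTriples] at ht
  exact ⟨Fin.lt_def.mpr ht.1, Fin.lt_def.mpr ht.2.1⟩

/-- The number of triples of break positions on a cycle of length `2k` whose three
pairwise circular distances between consecutive breaks are all at most `k - 1`
equals `2·C(k,3)`. -/
theorem threeClawBreaks_card (k : ℕ) (hk : 2 ≤ k) :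
    (threeClawBreaks k).card = 2 * Nat.choose k 3 :=
  threeClawBreaks_card_general k
end

section
/- Let T be a standard Young tableau of shape (2,...,2) with k rows such that b_i = 2i for some i ∈ [k-1], where b_1 < ... < b_k are the second-column entries. Then in the associated noncrossing matching M_T, vertex 1 is matched with some vertex in {2, 3, ..., 2i}; in particular {1, 2k} is not an edge of M_T. -/
/-- A standard Young tableau of two-column rectangular shape `(2,…,2)` with `k` rows:
a bijective filling of the `k × 2` grid by the values `1, …, 2k` that increases along
rows (left to right) and down columns. -/
structure SYT2 (k : ℕ) where
  entry : Fin k × Fin 2 → ℕ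
  mem_Icc : ∀ x, entry x ∈ Finset.Icc 1 (2 * k)
  inj : Function.Injective entry
  row_lt : ∀ r : Fin k, entry (r, 0) < entry (r, 1)
  col_lt : ∀ (r r' : Fin k) (c : Fin 2), r < r' → entry (r, c) < entry (r', c)

/-- The set of first-column entries of `T`. -/
def col1 {k : ℕ} (T : SYT2 k) : Finset ℕ :=
  Finset.univ.image fun r : Fin k => T.entry (r, 0)

/-- The set of second-column entries of `T`. -/
def col2 {k : ℕ} (T : SYT2 k) : Finset ℕ :=
  Finset.univ.image fun r : Fin k => T.entry (r, 1)

/-- `bseq T (i-1)` is `b_i`, the `i`-th smallest second-column entry of `T`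
(the second column increases down the rows). -/
def bseq {k : ℕ} (T : SYT2 k) (i : ℕ) : ℕ :=
  if h : i < k then T.entry (⟨i, h⟩, 1) else 0

/-- Greedy matching list: processing `b 0, b 1, …` in order, each `b i` is matched with
the largest entry of `c` smaller than `b i` that has not yet been used; `greedyList c b i`
is the list of the first `i` chosen partners. -/
def greedyList (c : Finset ℕ) (b : ℕ → ℕ) : ℕ → List ℕ
  | 0 => []
  | i + 1 =>
    let prev := greedyList c b i
    prev ++ [(c.filter fun a => a < b i ∧ a ∉ prev).sup id]

/-- The partner chosen for `b i` by the greedy matching procedure. -/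
def greedyPartner (c : Finset ℕ) (b : ℕ → ℕ) (i : ℕ) : ℕ :=
  (greedyList c b (i + 1)).getLastD 0

/-- The matching `M_T` associated to a two-column rectangular standard Young tableau `T`:
each second-column entry `b_i`, in increasing order, is matched with the largest
yet-unmatched first-column entry smaller than `b_i`.  Edges are recorded as ordered
pairs `(a, b)` with `a < b`. -/
def MT {k : ℕ} (T : SYT2 k) : Finset (ℕ × ℕ) :=
  (Finset.range k).image fun i => (greedyPartner (col1 T) (bseq T) i, bseq T i)

/-- `M` is a noncrossing perfect matching of `{1, …, 2k}`, with each edge recorded as an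
ordered pair `(a, b)`, `a < b`: every vertex lies in exactly one edge, and there are no
crossing edges `{a, c}`, `{b, d}` with `a < b < c < d`. -/
def IsNCPM (k : ℕ) (M : Finset (ℕ × ℕ)) : Prop :=
  (∀ p ∈ M, p.1 < p.2 ∧ p.1 ∈ Finset.Icc 1 (2 * k) ∧ p.2 ∈ Finset.Icc 1 (2 * k)) ∧
  (∀ v ∈ Finset.Icc 1 (2 * k), ∃! p, p ∈ M ∧ (v = p.1 ∨ v = p.2)) ∧
  (∀ p ∈ M, ∀ q ∈ M, ¬(p.1 < q.1 ∧ q.1 < p.2 ∧ p.2 < q.2))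



/-! Rows `1, …, i` of a two-column tableau hold `2i` distinct entries, all at most `b_i`, so
`b_i = 2i` forces them to be exactly `1, …, 2i`; hence exactly `i` first-column entries, among
them `1`, lie below `b_i`. Each greedy step picks a first-column entry below the current `b_j`
not used before, so the first `i` steps use up all of these, and `1` is matched with some
`b_j ≤ b_i = 2i`. Greedy partners are pairwise distinct, so `1` has no other partner, in
particular not `2k > 2i`. -/

open Finset

section Greedy

variable (c : Finset ℕ) (b : ℕ → ℕ)

theorem greedyPartner_eq_sup (n : ℕ) :
    greedyPartner c b n = (c.filter fun a => a < b n ∧ a ∉ greedyList c b n).sup id := by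
  simp [greedyPartner, greedyList]

theorem greedyList_eq_map_range (n : ℕ) :
    greedyList c b n = (List.range n).map (greedyPartner c b) := by
  induction n with
  | zero => rfl
  | succ n ih =>
    rw [List.range_succ, List.map_append, List.map_singleton, ← ih, greedyPartner_eq_sup]
    rfl

theorem mem_greedyList_iff {n x : ℕ} :
    x ∈ greedyList c b n ↔ ∃ j < n, greedyPartner c b j = x := by
  simp [greedyList_eq_map_range]

theorem toFinset_greedyList (n : ℕ) :
    (greedyList c b n).toFinset = (range n).image (greedyPartner c b) := by
  ext x
  simp [mem_greedyList_iff]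

variable {c b}

theorem greedyPartner_mem_filter {n : ℕ} (hc : n < #(c.filter (· < b n))) :
    greedyPartner c b n ∈ c.filter fun a => a < b n ∧ a ∉ greedyList c b n := by
  have hcard : #(greedyList c b n).toFinset < #(c.filter (· < b n)) := by
    rw [toFinset_greedyList]
    exact (card_image_le.trans (card_range n).le).trans_lt hc
  obtain ⟨y, hy, hyL⟩ := exists_mem_notMem_of_card_lt_card hcard
  have hne : (c.filter fun a => a < b n ∧ a ∉ greedyList c b n).Nonempty :=
    ⟨y, mem_filter.2 ⟨(mem_filter.1 hy).1, (mem_filter.1 hy).2,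
      fun h => hyL (List.mem_toFinset.2 h)⟩⟩
  obtain ⟨z, hz, hsup⟩ := exists_mem_eq_sup _ hne id
  rw [greedyPartner_eq_sup, hsup]
  exact hz

theorem greedyPartner_injOn {N : ℕ} (hc : ∀ m < N, m < #(c.filter (· < b m))) :
    Set.InjOn (greedyPartner c b) (Set.Iio N) := by
  suffices ∀ j m, j < m → m < N → greedyPartner c b j ≠ greedyPartner c b m by
    intro j hj m hm hjm
    by_contra hne
    rcases Nat.lt_or_gt_of_ne hne with h | h
    · exact this j m h hm hjm
    · exact this m j h hj hjm.symm
  intro j m hjm hm heq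
  have hfresh := (mem_filter.1 (greedyPartner_mem_filter (hc m hm))).2.2
  exact hfresh ((mem_greedyList_iff c b).2 ⟨j, hjm, heq⟩)

theorem toFinset_greedyList_eq_filter {n : ℕ} (hb : MonotoneOn b (Set.Iic n))
    (hc : ∀ m ≤ n, m < #(c.filter (· < b m))) (hn : #(c.filter (· < b n)) ≤ n + 1) :
    (greedyList c b (n + 1)).toFinset = c.filter (· < b n) := by
  rw [toFinset_greedyList]
  refine eq_of_subset_of_card_le ?_ ?_
  · intro x hx
    obtain ⟨j, hj, rfl⟩ := mem_image.1 hx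
    have hj : j ≤ n := Nat.lt_succ_iff.1 (mem_range.1 hj)
    have hjc := mem_filter.1 (greedyPartner_mem_filter (hc j hj))
    exact mem_filter.2 ⟨hjc.1, hjc.2.1.trans_le (hb hj Set.self_mem_Iic hj)⟩
  · have hinj : Set.InjOn (greedyPartner c b) (Set.Iio (n + 1)) :=
      greedyPartner_injOn fun m hm => hc m (Nat.lt_succ_iff.1 hm)
    rw [card_image_of_injOn (by simpa using hinj), card_range]
    exact hn

end Greedy

namespace SYT2

variable {k : ℕ} (T : SYT2 k)

theorem one_le_entry (x : Fin k × Fin 2) : 1 ≤ T.entry x := (Finset.mem_Icc.1 (T.mem_Icc x)).1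

theorem entry_le_entry {s t : Fin k} (c : Fin 2) (h : s ≤ t) :
    T.entry (s, c) ≤ T.entry (t, c) := by
  rcases h.lt_or_eq with h | rfl
  · exact (T.col_lt s t c h).le
  · exact le_rfl

theorem entry_zero_lt_entry_one {s t : Fin k} (h : s ≤ t) : T.entry (s, 0) < T.entry (t, 1) :=
  (T.entry_le_entry 0 h).trans_lt (T.row_lt t)

theorem image_entry_Iic_eq_Icc {r : Fin k} (hb : T.entry (r, 1) = 2 * (r.1 + 1)) :
    (Iic r ×ˢ univ).image T.entry = Icc 1 (2 * (r.1 + 1)) := by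
  refine eq_of_subset_of_card_le ?_ ?_
  · intro x hx
    obtain ⟨⟨s, c⟩, hs, rfl⟩ := mem_image.1 hx
    have hsr : s ≤ r := mem_Iic.1 (mem_product.1 hs).1
    have hc : T.entry (r, c) ≤ T.entry (r, 1) := by
      fin_cases c
      · exact (T.row_lt r).le
      · exact le_rfl
    exact Finset.mem_Icc.2 ⟨T.one_le_entry _, hb ▸ (T.entry_le_entry c hsr).trans hc⟩
  · rw [card_image_of_injective _ T.inj, card_product, Fin.card_Iic, card_univ,
      Fintype.card_fin, Nat.card_Icc]
    omega

theorem one_mem_col1 {r : Fin k} (hb : T.entry (r, 1) = 2 * (r.1 + 1)) : 1 ∈ col1 T := by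
  have h1 : 1 ∈ (Iic r ×ˢ univ).image T.entry := by
    rw [T.image_entry_Iic_eq_Icc hb]
    exact Finset.mem_Icc.2 ⟨le_rfl, by omega⟩
  obtain ⟨⟨s, c⟩, -, hs⟩ := mem_image.1 h1
  fin_cases c
  · exact mem_image.2 ⟨s, mem_univ s, hs⟩
  · have := T.row_lt s
    have := T.one_le_entry (s, 0)
    simp_all

theorem card_col1_filter_lt_le {r : Fin k} (hb : T.entry (r, 1) = 2 * (r.1 + 1)) :
    #((col1 T).filter (· < 2 * (r.1 + 1))) ≤ r.1 + 1 := by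
  have hsub : (col1 T).filter (· < 2 * (r.1 + 1)) ⊆ (Iic r).image fun s => T.entry (s, 0) := by
    intro a ha
    obtain ⟨ha, hlt⟩ := mem_filter.1 ha
    obtain ⟨s, -, rfl⟩ := mem_image.1 ha
    have hs : T.entry (s, 0) ∈ (Iic r ×ˢ univ).image T.entry := by
      rw [T.image_entry_Iic_eq_Icc hb]
      exact Finset.mem_Icc.2 ⟨T.one_le_entry _, hlt.le⟩
    obtain ⟨⟨t, c⟩, ht, hts⟩ := mem_image.1 hs
    obtain rfl : t = s := (Prod.ext_iff.1 (T.inj hts)).1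
    exact mem_image.2 ⟨t, (mem_product.1 ht).1, rfl⟩
  calc #((col1 T).filter (· < 2 * (r.1 + 1)))
      ≤ #((Iic r).image fun s => T.entry (s, 0)) := card_le_card hsub
    _ ≤ r.1 + 1 := card_image_le.trans (Fin.card_Iic r).le

end SYT2

section bseq

variable {k : ℕ} (T : SYT2 k)

theorem bseq_of_lt {m : ℕ} (hm : m < k) : bseq T m = T.entry (⟨m, hm⟩, 1) := dif_pos hm

theorem strictMonoOn_bseq : StrictMonoOn (bseq T) (Set.Iio k) := by
  intro j hj m hm hjm
  rw [bseq_of_lt T hj, bseq_of_lt T hm]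
  exact T.col_lt _ _ _ hjm

theorem two_le_bseq {m : ℕ} (hm : m < k) : 2 ≤ bseq T m := by
  have := T.row_lt ⟨m, hm⟩
  have := T.one_le_entry (⟨m, hm⟩, 0)
  rw [bseq_of_lt T hm]
  omega

theorem lt_card_col1_filter_lt_bseq {m : ℕ} (hm : m < k) :
    m < #((col1 T).filter (· < bseq T m)) := by
  have hsub : (Iic (⟨m, hm⟩ : Fin k)).image (fun s => T.entry (s, 0))
      ⊆ (col1 T).filter (· < bseq T m) := by
    intro x hx
    obtain ⟨s, hs, rfl⟩ := mem_image.1 hx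
    rw [bseq_of_lt T hm]
    exact mem_filter.2 ⟨mem_image.2 ⟨s, mem_univ s, rfl⟩,
      T.entry_zero_lt_entry_one (mem_Iic.1 hs)⟩
  calc m < #((Iic (⟨m, hm⟩ : Fin k)).image (fun s => T.entry (s, 0))) := by
        rw [card_image_of_injective _ fun s t h => (Prod.ext_iff.1 (T.inj h)).1, Fin.card_Iic]
        exact Nat.lt_succ_self m
    _ ≤ _ := card_le_card hsub

end bseq

/-- If `b_i = 2i` for some `i ∈ [k-1]` (encoded by the row index `r = i - 1 : Fin k`),
then in the noncrossing matching `M_T` the vertex `1` is matched with some vertex in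
`{2, 3, …, 2i}`; in particular `{1, 2k}` is not an edge of `M_T`. -/
theorem one_matched_low (k : ℕ) (T : SYT2 k) (r : Fin k) (hr : r.1 + 1 < k)
    (hb : T.entry (r, 1) = 2 * (r.1 + 1)) :
    (∃ v, 2 ≤ v ∧ v ≤ 2 * (r.1 + 1) ∧ (1, v) ∈ MT T) ∧ (1, 2 * k) ∉ MT T := by
  have hcard : ∀ m < k, m < #((col1 T).filter (· < bseq T m)) :=
    fun m hm => lt_card_col1_filter_lt_bseq T hm
  have hmono : MonotoneOn (bseq T) (Set.Iic r.1) :=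
    (strictMonoOn_bseq T).monotoneOn.mono fun m hm => lt_of_le_of_lt hm r.2
  have hbr : bseq T r.1 = 2 * (r.1 + 1) := (bseq_of_lt T r.2).trans hb
  obtain ⟨j, hj, hj1⟩ : ∃ j ≤ r.1, greedyPartner (col1 T) (bseq T) j = 1 := by
    simp only [← Nat.lt_succ_iff, ← mem_greedyList_iff, ← List.mem_toFinset]
    rw [toFinset_greedyList_eq_filter hmono (fun m hm => hcard m (hm.trans_lt r.2))
      (hbr ▸ T.card_col1_filter_lt_le hb), hbr]
    exact mem_filter.2 ⟨T.one_mem_col1 hb, by omega⟩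
  have hjk : j < k := hj.trans_lt r.2
  have hbj : bseq T j ≤ 2 * (r.1 + 1) := hbr ▸ hmono hj Set.self_mem_Iic hj
  refine ⟨⟨bseq T j, two_le_bseq T hjk, hbj,
    mem_image.2 ⟨j, mem_range.2 hjk, by rw [hj1]⟩⟩, ?_⟩
  intro hmem
  obtain ⟨m, hm, hpm⟩ := mem_image.1 hmem
  simp only [Prod.mk.injEq] at hpm
  obtain rfl : m = j := greedyPartner_injOn hcard (mem_range.1 hm) hjk (hpm.1.trans hj1.symm)
  omega
end
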